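/- arXiv:1107.1110 — 3 statements merged into one kernel-verified Lean document; each statement's English description precedes it below -/
import Mathlib

section
/- Let c ∈ 𝔽_q[t] \ {0} and let B = B_κ(Γ) be a Bohr set in G_N of width k (i.e. k = max_{ξ∈Γ} κ(ξ)) such that B ⊆ G_{N−deg c}. Then the dilate c·B = {cx : x ∈ B} is itself a Bohr set in G_N, of rank at most rk(B) + q^{deg c} and width k. -/
open Finset

/-- `G_N`: the polynomials over `F` of degree `< N`, as a finite set. -/
noncomputable def GN (F : Type) [Field F] [Fintype F] (N : ℕ) : Finset (Polynomial F) :=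
  letI := Classical.decEq (Polynomial F)
  Finset.image (fun a : Fin N → F => ∑ i : Fin N, Polynomial.C (a i) * Polynomial.X ^ (i : ℕ))
    Finset.univ

/-- For a polynomial `x = ∑ x_j t^j` and `ξ = ∑_{n ≥ 0} (ξ n) t^{-(n+1)} ∈ 𝕋`, the coefficient of
`t^{-m}` (for `m ≥ 1`) in the product `x·ξ`, an element of `F((1/t))`. -/
def mulCoeff {F : Type} [Semiring F] (x : Polynomial F) (ξ : ℕ → F) (m : ℕ) : F :=
  ∑ j ∈ Finset.range (x.natDegree + 1), x.coeff j * ξ (m - 1 + j)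

/-- The Bohr set `B_w(Γ) = {x ∈ G_N : deg {x ξ} < -w ξ for all ξ ∈ Γ}`, where elements of
`𝕋 = {∑_{i<0} a_i t^i}` are represented by functions `ℕ → F` (the `n`-th value being the
coefficient of `t^{-(n+1)}`).  The rank of this Bohr set is `Γ.card` and its width is the
maximum of `w` over `Γ`. -/
noncomputable def bohr (F : Type) [Field F] [Fintype F] (N : ℕ) (Γ : Finset (ℕ → F))
    (w : (ℕ → F) → ℕ) : Finset (Polynomial F) :=
  letI := Classical.decPred fun x : Polynomial F =>
    ∀ ξ ∈ Γ, ∀ m ∈ Finset.Icc 1 (w ξ), mulCoeff x ξ m = 0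
  (GN F N).filter fun x => ∀ ξ ∈ Γ, ∀ m ∈ Finset.Icc 1 (w ξ), mulCoeff x ξ m = 0

/-- The density `|A|/|B|` of `A` in `B`. -/
noncomputable def dens {G : Type} (B A : Finset G) : ℝ := (A.card : ℝ) / B.card

/-- The density `|(A + x) ∩ B'| / |B'|` of the translate `A + x` in `B'`. -/
noncomputable def densShift {G : Type} [AddGroup G] (B' A : Finset G) (x : G) : ℝ :=
  letI := Classical.decEq G
  (((A.image (· + x)) ∩ B').card : ℝ) / B'.card

/-- Indicator function of a finite set, real valued. -/
noncomputable def ind {G : Type} (A : Finset G) : G → ℝ := fun x =>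
  letI := Classical.decEq G
  if x ∈ A then 1 else 0

/-- Convolution with respect to the uniform measure on `B`:
`(f ∗ g)(x) = 𝔼_{y ∈ B} f(y) g(x - y)`. -/
noncomputable def convWith {G : Type} [AddCommGroup G] (B : Finset G) (f g : G → ℝ) : G → ℝ :=
  fun x => (∑ y ∈ B, f y * g (x - y)) / B.card

/-- Iterated convolution `f ∗ S₁ ∗ ⋯ ∗ S_k` (with respect to the uniform measure on `B`),
the sets `Sᵢ` being identified with their indicator functions. -/
noncomputable def iconv {G : Type} [AddCommGroup G] (B : Finset G) :
    (G → ℝ) → List (Finset G) → (G → ℝ)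
  | f, [] => f
  | f, S :: rest => iconv B (convWith B f (ind S)) rest

/-- The inner product `⟨f, g⟩_β = 𝔼_{x ∈ B} f(x) g(x)` (for real-valued functions). -/
noncomputable def innerB {G : Type} (B : Finset G) (f g : G → ℝ) : ℝ :=
  (∑ x ∈ B, f x * g x) / B.card

/-- The dilate `c · B = {c x : x ∈ B}` of a finite set of polynomials. -/
noncomputable def dilate {F : Type} [Field F] (c : Polynomial F) (B : Finset (Polynomial F)) :
    Finset (Polynomial F) :=
  letI := Classical.decEq (Polynomial F)
  B.image (fun x => c * x)

/-! Embed `𝔽[t]` into the Laurent series `𝔽((u))`, `u = 1/t`. Since `mulCoeff x ξ m` only reads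
the coefficients of `u^m` with `m ≥ 1`, the Bohr conditions of `c x` at the fractional part of
`ξ / c` are exactly those of `x` at `ξ`. The extra frequencies `t^j / c`, `j < deg c`, each of
width `1`, cut out the multiples of `c`: if `r = y mod c ≠ 0`, then `t^j y / c` differs from
`t^j r / c` by a polynomial, and for `j = deg c - deg r - 1` the latter has order exactly `1` in
`u`. This uses `rk B + deg c ≤ rk B + q^{deg c}` frequencies. -/

namespace BohrDilate

open Finset Polynomial

variable {F : Type}

section LaurentSeries

variable [Field F]

/-- `t ↦ u⁻¹`: Laurent series here are in the variable `u = 1/t`. -/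
noncomputable def evalInvX : F[X] →+* LaurentSeries F :=
  eval₂RingHom HahnSeries.C (HahnSeries.single (-1) 1)

/-- The coefficients of `u, u², …` of a Laurent series in `u = 1/t`: the encoding of its
fractional part used by `mulCoeff` and `bohr`. -/
def fracCoeffs (f : LaurentSeries F) : ℕ → F := fun n => f.coeff (n + 1)

noncomputable def ofFracCoeffs (ξ : ℕ → F) : LaurentSeries F :=
  ((PowerSeries.X * PowerSeries.mk ξ : PowerSeries F) : LaurentSeries F)

theorem fracCoeffs_ofFracCoeffs (ξ : ℕ → F) : fracCoeffs (ofFracCoeffs ξ) = ξ := by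
  ext n
  rw [fracCoeffs, ofFracCoeffs, ← Nat.cast_succ, LaurentSeries.coeff_coe_powerSeries,
    PowerSeries.coeff_succ_X_mul, PowerSeries.coeff_mk]

theorem evalInvX_eq_sum (p : F[X]) :
    evalInvX p = ∑ j ∈ range (p.natDegree + 1), HahnSeries.single (-(j : ℤ)) (p.coeff j) := by
  rw [evalInvX, coe_eval₂RingHom, eval₂_eq_sum_range]
  refine sum_congr rfl fun j _ => ?_
  rw [HahnSeries.single_pow, one_pow, HahnSeries.C_apply, HahnSeries.single_mul_single, zero_add,
    mul_one, smul_neg, nsmul_one]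

theorem evalInvX_mul_coeff (p : F[X]) (f : LaurentSeries F) (z : ℤ) :
    (evalInvX p * f).coeff z = ∑ j ∈ range (p.natDegree + 1), p.coeff j * f.coeff (z + j) := by
  rw [evalInvX_eq_sum, sum_mul, HahnSeries.coeff_sum]
  refine sum_congr rfl fun j _ => ?_
  simpa using HahnSeries.coeff_single_mul_add (r := p.coeff j) (x := f) (a := z + j) (b := -j)

theorem mulCoeff_fracCoeffs (x : F[X]) (f : LaurentSeries F) {m : ℕ} (hm : 1 ≤ m) :
    mulCoeff x (fracCoeffs f) m = (evalInvX x * f).coeff m := by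
  rw [evalInvX_mul_coeff, mulCoeff]
  refine sum_congr rfl fun j _ => ?_
  rw [fracCoeffs]
  congr 2
  omega

theorem evalInvX_coeff (p : F[X]) (z : ℤ) :
    (evalInvX p).coeff z = if z ≤ 0 then p.coeff (-z).toNat else 0 := by
  rw [← mul_one (evalInvX p), evalInvX_mul_coeff]
  simp only [HahnSeries.coeff_one, mul_ite, mul_one, mul_zero]
  split_ifs with hz
  · rw [sum_eq_single (-z).toNat (fun j _ hj => if_neg (by omega)), if_pos (by omega)]
    intro h
    rw [if_pos (by omega), coeff_eq_zero_of_natDegree_lt (by simp at h; omega)]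
  · exact sum_eq_zero fun j _ => if_neg (by omega)

theorem evalInvX_coeff_of_pos (p : F[X]) {z : ℤ} (hz : 0 < z) : (evalInvX p).coeff z = 0 := by
  rw [evalInvX_coeff, if_neg (by omega)]

theorem evalInvX_coeff_neg_natDegree (p : F[X]) :
    (evalInvX p).coeff (-p.natDegree) = p.leadingCoeff := by
  rw [evalInvX_coeff, if_pos (by omega), neg_neg, Int.toNat_natCast, leadingCoeff]

theorem evalInvX_ne_zero {p : F[X]} (hp : p ≠ 0) : evalInvX p ≠ 0 := fun h => by
  have := evalInvX_coeff_neg_natDegree p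
  rw [h, HahnSeries.coeff_zero, eq_comm, leadingCoeff_eq_zero] at this
  exact hp this

theorem order_evalInvX {p : F[X]} (hp : p ≠ 0) : (evalInvX p).order = -p.natDegree := by
  refine le_antisymm (HahnSeries.order_le_of_coeff_ne_zero ?_) ?_
  · rwa [evalInvX_coeff_neg_natDegree, ne_eq, leadingCoeff_eq_zero]
  · refine (HahnSeries.le_order_iff_forall (evalInvX_ne_zero hp)).2 fun z hz => ?_
    rw [evalInvX_coeff, if_pos (by omega), coeff_eq_zero_of_natDegree_lt (by omega)]

theorem order_evalInvX_div {p c : F[X]} (hp : p ≠ 0) (hc : c ≠ 0) :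
    (evalInvX p / evalInvX c).order = c.natDegree - p.natDegree := by
  have hq : evalInvX p / evalInvX c ≠ 0 := div_ne_zero (evalInvX_ne_zero hp) (evalInvX_ne_zero hc)
  have h := HahnSeries.order_mul hq (evalInvX_ne_zero hc)
  rw [div_mul_cancel₀ _ (evalInvX_ne_zero hc), order_evalInvX hp, order_evalInvX hc] at h
  omega

theorem mulCoeff_mul_fracCoeffs_div {c : F[X]} (hc : c ≠ 0) (x : F[X]) (ξ : ℕ → F) {m : ℕ}
    (hm : 1 ≤ m) :
    mulCoeff (c * x) (fracCoeffs (ofFracCoeffs ξ / evalInvX c)) m = mulCoeff x ξ m := by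
  rw [mulCoeff_fracCoeffs _ _ hm, map_mul, mul_comm (evalInvX c), mul_assoc,
    mul_div_cancel₀ _ (evalInvX_ne_zero hc), ← mulCoeff_fracCoeffs _ _ hm,
    fracCoeffs_ofFracCoeffs]

theorem dvd_iff_forall_mulCoeff_fracCoeffs_eq_zero {c : F[X]} (hc : c ≠ 0) (y : F[X]) :
    c ∣ y ↔ ∀ j < c.natDegree,
      mulCoeff y (fracCoeffs (evalInvX (X ^ j) / evalInvX c)) 1 = 0 := by
  simp_rw [mulCoeff_fracCoeffs _ _ le_rfl, ← mul_div_assoc, ← map_mul, Nat.cast_one]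
  constructor
  · rintro ⟨x, rfl⟩ j -
    rw [mul_assoc, map_mul, mul_div_cancel_left₀ _ (evalInvX_ne_zero hc),
      evalInvX_coeff_of_pos _ one_pos]
  · intro h
    by_contra hdvd
    have hr : y % c ≠ 0 := fun h0 => hdvd (EuclideanDomain.mod_eq_zero.1 h0)
    have hrc : (y % c).natDegree < c.natDegree :=
      natDegree_lt_natDegree hr (EuclideanDomain.mod_lt y hc)
    set j := c.natDegree - (y % c).natDegree - 1
    -- with this shift, `t^j (y mod c) / c` has order exactly `1` in `u = 1/t`
    have horder : (evalInvX (y % c * X ^ j) / evalInvX c).order = 1 := by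
      rw [order_evalInvX_div (mul_ne_zero hr (pow_ne_zero _ X_ne_zero)) hc,
        natDegree_mul_X_pow _ hr]
      omega
    have hsplit : evalInvX (y * X ^ j) / evalInvX c
        = evalInvX (y / c * X ^ j) + evalInvX (y % c * X ^ j) / evalInvX c := by
      conv_lhs => rw [← EuclideanDomain.div_add_mod y c]
      rw [add_mul, map_add, add_div, mul_assoc, map_mul,
        mul_div_cancel_left₀ _ (evalInvX_ne_zero hc)]
    have h1 := h j (by omega)
    rw [hsplit, HahnSeries.coeff_add, evalInvX_coeff_of_pos _ one_pos, zero_add, ← horder,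
      HahnSeries.coeff_order_eq_zero, div_eq_zero_iff] at h1
    exact h1.elim (evalInvX_ne_zero (mul_ne_zero hr (pow_ne_zero _ X_ne_zero)))
      (evalInvX_ne_zero hc)

end LaurentSeries

section FiniteSets

variable [Field F] [Fintype F]

theorem mem_GN_iff {N : ℕ} {p : F[X]} : p ∈ GN F N ↔ p.degree < N := by
  rw [GN, @mem_image _ _ (Classical.decEq _)]
  simp only [mem_univ, true_and]
  refine ⟨fun ⟨a, ha⟩ => ha ▸ degree_sum_fin_lt a, fun hp => ⟨fun i => p.coeff i, ?_⟩⟩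
  rw [Fin.sum_univ_eq_sum_range (fun i => C (p.coeff i) * X ^ i)]
  rcases eq_or_ne p 0 with rfl | hp0
  · simp
  · exact (as_sum_range_C_mul_X_pow' p ((natDegree_lt_iff_degree_lt hp0).2 hp)).symm

theorem GN_mono : Monotone (GN F) := fun _ _ h _ hp =>
  mem_GN_iff.2 ((mem_GN_iff.1 hp).trans_le (by exact_mod_cast h))

theorem mul_mem_GN_iff {N : ℕ} {c : F[X]} (hc : c ≠ 0) {x : F[X]} :
    c * x ∈ GN F N ↔ x ∈ GN F (N - c.natDegree) := by
  rcases eq_or_ne x 0 with rfl | hx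
  · simp [mem_GN_iff]
  · rw [mem_GN_iff, mem_GN_iff, ← natDegree_lt_iff_degree_lt (mul_ne_zero hc hx),
      ← natDegree_lt_iff_degree_lt hx, natDegree_mul hc hx]
    omega

theorem mem_bohr_iff {N : ℕ} {Γ : Finset (ℕ → F)} {w : (ℕ → F) → ℕ} {x : F[X]} :
    x ∈ bohr F N Γ w ↔ x ∈ GN F N ∧ ∀ ξ ∈ Γ, ∀ m ∈ Icc 1 (w ξ), mulCoeff x ξ m = 0 :=
  @mem_filter _ _ (Classical.decPred _) _ _

end FiniteSets

theorem mem_dilate_iff [Field F] {c : F[X]} {B : Finset F[X]} {y : F[X]} :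
    y ∈ dilate c B ↔ ∃ x ∈ B, c * x = y :=
  @mem_image _ _ (Classical.decEq _) _ _ _

section ImageWidth

variable {ι : Type*} [DecidableEq (ℕ → F)] (S : Finset ι) (φ : ι → ℕ → F) (v : ι → ℕ)

/-- Taking the largest width over a preimage keeps the Bohr conditions of every `i ∈ S`,
whether or not `φ` is injective. -/
def imageWidth : (ℕ → F) → ℕ := fun η => S.sup fun i => if φ i = η then v i else 0

theorem le_imageWidth {i : ι} (hi : i ∈ S) : v i ≤ imageWidth S φ v (φ i) :=
  le_sup_of_le hi (by rw [if_pos rfl])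

theorem imageWidth_le {k : ℕ} (h : ∀ i ∈ S, v i ≤ k) (η : ℕ → F) : imageWidth S φ v η ≤ k :=
  Finset.sup_le fun i hi => by split_ifs <;> simp [h i hi]

theorem mem_bohr_image_iff [Field F] [Fintype F] {N : ℕ} {x : F[X]} :
    x ∈ bohr F N (S.image φ) (imageWidth S φ v) ↔
      x ∈ GN F N ∧ ∀ i ∈ S, ∀ m ∈ Icc 1 (v i), mulCoeff x (φ i) m = 0 := by
  rw [mem_bohr_iff, forall_mem_image]
  refine and_congr_right fun _ => ⟨fun h i hi m hm => h hi m ?_, fun h i hi m hm => ?_⟩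
  · exact Icc_subset_Icc_right (le_imageWidth S φ v hi) hm
  · obtain ⟨hm1, hm⟩ := mem_Icc.1 hm
    obtain ⟨i', hi', hm'⟩ := (Finset.le_sup_iff (by simp; omega)).1 hm
    split_ifs at hm' with heq
    · exact heq ▸ h i' hi' m (mem_Icc.2 ⟨hm1, hm'⟩)
    · omega

end ImageWidth

end BohrDilate

open BohrDilate Polynomial

/-- Lemma 2.1 of the paper.  If `c ∈ 𝔽_q[t] ∖ {0}` and `B = B_w(Γ)` is a Bohr
set in `G_N` of width `k ≥ 1` (i.e. `w ξ ≤ k` on `Γ`) with `B ⊆ G_{N - deg c}`, then `c · B` is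
again a Bohr set in `G_N`, of rank at most `rk B + q^{deg c}` and width (at most) `k`. -/
theorem statement_3 (F : Type) [Field F] [Fintype F] (N : ℕ) (c : Polynomial F) (hc : c ≠ 0)
    (Γ : Finset (ℕ → F)) (w : (ℕ → F) → ℕ) (k : ℕ) (hk : 1 ≤ k) (hw : ∀ ξ ∈ Γ, w ξ ≤ k)
    (hsub : bohr F N Γ w ⊆ GN F (N - c.natDegree)) :
    ∃ (Γ' : Finset (ℕ → F)) (w' : (ℕ → F) → ℕ),
      dilate c (bohr F N Γ w) = bohr F N Γ' w' ∧
      Γ'.card ≤ Γ.card + Fintype.card F ^ c.natDegree ∧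
      ∀ ξ ∈ Γ', w' ξ ≤ k := by
  classical
  let S := Γ.disjSum (Finset.range c.natDegree)
  let φ : (ℕ → F) ⊕ ℕ → ℕ → F := Sum.elim (fun ξ => fracCoeffs (ofFracCoeffs ξ / evalInvX c))
    fun j => fracCoeffs (evalInvX (X ^ j) / evalInvX c)
  let v : (ℕ → F) ⊕ ℕ → ℕ := Sum.elim w 1
  refine ⟨S.image φ, imageWidth S φ v, ?_, ?_, fun η _ => imageWidth_le S φ v ?_ η⟩
  · ext y
    simp only [mem_dilate_iff, mem_bohr_image_iff, S, Sum.forall, Finset.inl_mem_disjSum,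
      Finset.inr_mem_disjSum, φ, v, Sum.elim_inl, Sum.elim_inr, Pi.one_apply,
      Finset.Icc_self, Finset.mem_singleton, forall_eq, Finset.mem_range]
    constructor
    · rintro ⟨x, hx, rfl⟩
      obtain ⟨-, hxΓ⟩ := mem_bohr_iff.1 hx
      refine ⟨(mul_mem_GN_iff hc).2 (hsub hx), fun ξ hξ m hm => ?_, ?_⟩
      · rw [mulCoeff_mul_fracCoeffs_div hc x ξ (Finset.mem_Icc.1 hm).1]
        exact hxΓ ξ hξ m hm
      · exact (dvd_iff_forall_mulCoeff_fracCoeffs_eq_zero hc _).1 (dvd_mul_right c x)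
    · rintro ⟨hy, hyΓ, hdvd⟩
      obtain ⟨x, rfl⟩ := (dvd_iff_forall_mulCoeff_fracCoeffs_eq_zero hc y).2 hdvd
      refine ⟨x, mem_bohr_iff.2 ⟨GN_mono (Nat.sub_le _ _) ((mul_mem_GN_iff hc).1 hy), ?_⟩, rfl⟩
      intro ξ hξ m hm
      rw [← mulCoeff_mul_fracCoeffs_div hc x ξ (Finset.mem_Icc.1 hm).1]
      exact hyΓ ξ hξ m hm
  · calc (S.image φ).card ≤ S.card := Finset.card_image_le
      _ = Γ.card + c.natDegree := by rw [Finset.card_disjSum, Finset.card_range]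
      _ ≤ Γ.card + Fintype.card F ^ c.natDegree :=
        Nat.add_le_add_left (Nat.lt_pow_self Fintype.one_lt_card).le _
  · rintro (ξ | j) hi
    · exact hw ξ (Finset.inl_mem_disjSum.1 hi)
    · exact hk
end

section
/- (Chang's lemma.) Let G be any finite additive group and D ⊆ G a subset with density δ = |D|/|G| > 0. If η > 0, then there is a subset Δ̃ ⊆ Δ_η(D) such that |Δ̃| ≤ C η^{−2} log(1/δ) for an absolute constant C, and Δ_η(D) ⊆ {∑_{λ∈Δ̃} ε_λ λ : ε_λ ∈ {−1,0,1}}, i.e. every element of Δ_η(D) is a {−1,0,1}-combination of elements of Δ̃. -/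
open Finset

/-- The Fourier transform of the indicator of `D ⊆ G` at a character `γ ∈ Ĝ`:
`D̂(γ) = 𝔼_{x ∈ G} 1_D(x) γ(x)`. -/
noncomputable def fourierInd {G : Type} [AddCommGroup G] [Fintype G] (D : Finset G)
    (γ : AddChar G Circle) : ℂ :=
  letI := Classical.decEq G
  (∑ x : G, if x ∈ D then (γ x : ℂ) else 0) / (Fintype.card G : ℂ)

/-- The `η`-spectrum `Δ_η(D) = {γ ∈ Ĝ : |D̂(γ)| ≥ η ‖1_D‖₁}`, where `‖1_D‖₁ = |D|/|G|`. -/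
def specSet {G : Type} [AddCommGroup G] [Fintype G] (η : ℝ) (D : Finset G) :
    Set (AddChar G Circle) :=
  {γ | η * ((D.card : ℝ) / Fintype.card G) ≤ ‖fourierInd D γ‖}


/-!
Take a maximal dissociated subset `Λ` of the spectrum: it spans the spectrum with coefficients
in `{-1, 0, 1}`, so it suffices to bound `m = |Λ|` for dissociated `Λ ⊆ Δ_η(D)`. Rotating the
coefficients `D̂(γ)`, `γ ∈ Λ`, onto the positive real axis gives `g = ∑_γ Re (c_γ γ)` with
`∑_{x ∈ D} g x ≥ m η |D|`, so by convexity `∑_{x ∈ D} exp (η g x) ≥ |D| exp (m η²)`. On the other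
hand `exp (η Re (c_γ γ x)) ≤ cosh η + Re (c_γ γ x) sinh η`, and dissociation makes the Riesz product
of these factors average to `cosh η ^ m ≤ exp (m η² / 2)` over `G`. Hence
`|D| exp (m η²) ≤ |G| exp (m η² / 2)`, that is `m η² ≤ 2 log (1 / δ)`.
-/

open scoped BigOperators ComplexConjugate

noncomputable instance AddChar.instFintypeCircle {G : Type} [AddCommGroup G] [Finite G] :
    Fintype (AddChar G Circle) :=
  Fintype.ofEquiv _ AddChar.circleEquivComplex.symm.toEquiv

lemma Complex.conj_div_norm_mul_self (z : ℂ) : conj z / ‖z‖ * z = ‖z‖ := by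
  rcases eq_or_ne z 0 with rfl | hz
  · simp
  · rw [div_mul_eq_mul_div, conj_mul', sq, mul_div_assoc, div_self (by simpa using hz), mul_one]

lemma Complex.norm_conj_div_norm_le_one (z : ℂ) : ‖conj z / ‖z‖‖ ≤ 1 := by
  rw [norm_div, Complex.norm_conj, Complex.norm_real, norm_norm]
  exact div_self_le_one _

open Real in
lemma Finset.card_mul_exp_le_sum_exp {ι : Type*} (s : Finset ι) {f : ι → ℝ} {c : ℝ}
    (h : #s * c ≤ ∑ i ∈ s, f i) : #s * exp c ≤ ∑ i ∈ s, exp (f i) := by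
  have tangent (i : ι) : exp c * (f i - c + 1) ≤ exp (f i) :=
    calc exp c * (f i - c + 1) ≤ exp c * exp (f i - c) :=
          mul_le_mul_of_nonneg_left (add_one_le_exp _) (exp_pos c).le
      _ = exp (f i) := by rw [← exp_add, add_sub_cancel]
  calc #s * exp c ≤ ∑ i ∈ s, exp c * (f i - c + 1) := by
        rw [← mul_sum, sum_add_distrib, sum_sub_distrib, sum_const, sum_const, nsmul_eq_mul,
          nsmul_eq_mul, mul_one]
        nlinarith [exp_pos c]
    _ ≤ ∑ i ∈ s, exp (f i) := sum_le_sum fun i _ ↦ tangent i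

section Dissociated

variable {G : Type} [AddCommGroup G] [Fintype G]

lemma MulDissociated.expect_prod_add_re {Λ : Finset (AddChar G Circle)}
    (hΛ : MulDissociated (Λ : Set (AddChar G Circle))) (a : ℝ) (b : AddChar G Circle → ℂ) :
    𝔼 x, ∏ γ ∈ Λ, (a + (b γ * γ x).re) = a ^ #Λ := by
  classical
  let e : AddChar G Circle ≃+ AddChar G ℂ := AddChar.circleEquivComplex
  have prod_extend (H : AddChar G Circle → ℝ) :
      ∏ ψ, (if e.symm ψ ∈ Λ then H (e.symm ψ) else 1) = ∏ γ ∈ Λ, H γ := by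
    rw [← Fintype.prod_extend_by_one Λ H]
    exact Fintype.prod_equiv e.symm.toEquiv _ _ fun _ ↦ rfl
  have hdiss : AddDissociated {ψ | (if e.symm ψ ∈ Λ then b (e.symm ψ) else 0) ≠ 0} :=
    (e.symm.addDissociated_preimage.2 hΛ).subset fun ψ hψ ↦ by_contra fun h ↦ hψ (if_neg h)
  have key := hdiss.randomisation fun ψ ↦ if e.symm ψ ∈ Λ then a else 1
  rw [prod_extend fun _ ↦ a, prod_const] at key
  rw [← key]
  refine expect_congr rfl fun x _ ↦ ?_
  rw [← prod_extend fun γ ↦ a + (b γ * γ x).re]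
  refine prod_congr rfl fun ψ _ ↦ ?_
  split_ifs
  · rfl
  · simp

open Real in
lemma MulDissociated.expect_exp_sum_re_le {Λ : Finset (AddChar G Circle)}
    (hΛ : MulDissociated (Λ : Set (AddChar G Circle))) {c : AddChar G Circle → ℂ}
    (hc : ∀ γ, ‖c γ‖ ≤ 1) (t : ℝ) :
    𝔼 x, exp (t * ∑ γ ∈ Λ, (c γ * γ x).re) ≤ exp (#Λ * (t ^ 2 / 2)) := by
  have hre (γ : AddChar G Circle) (x : G) : |(c γ * γ x).re| ≤ 1 := by
    refine (Complex.abs_re_le_norm _).trans ?_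
    rw [norm_mul, Circle.norm_coe, mul_one]
    exact hc γ
  calc 𝔼 x, exp (t * ∑ γ ∈ Λ, (c γ * γ x).re)
      = 𝔼 x, ∏ γ ∈ Λ, exp (t * (c γ * γ x).re) := by
        simp only [mul_sum, exp_sum]
    _ ≤ 𝔼 x, ∏ γ ∈ Λ, (cosh t + (sinh t * c γ * γ x).re) := by
        refine expect_le_expect fun x _ ↦ prod_le_prod (fun _ _ ↦ (exp_pos _).le) fun γ _ ↦ ?_
        rw [mul_assoc, Complex.re_ofReal_mul, mul_comm (sinh t), mul_comm t]
        exact exp_mul_le_cosh_add_mul_sinh (hre γ x) t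
    _ = cosh t ^ #Λ := hΛ.expect_prod_add_re _ _
    _ ≤ exp (t ^ 2 / 2) ^ #Λ := pow_le_pow_left₀ (cosh_pos t).le (cosh_le_exp_half_sq t) _
    _ = exp (#Λ * (t ^ 2 / 2)) := (exp_nat_mul _ _).symm

lemma sum_coe_addChar_eq_card_mul_fourierInd (D : Finset G) (γ : AddChar G Circle) :
    ∑ x ∈ D, (γ x : ℂ) = Fintype.card G * fourierInd D γ := by
  classical
  rw [fourierInd, mul_div_cancel₀ _ (Nat.cast_ne_zero.2 Fintype.card_ne_zero), sum_ite_mem,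
    univ_inter]

open Real in
theorem card_mul_sq_le_of_mulDissociated_subset_specSet {D : Finset G} (hD : D.Nonempty)
    {η : ℝ} (hη : 0 ≤ η) {Λ : Finset (AddChar G Circle)} (hΛη : (Λ : Set _) ⊆ specSet η D)
    (hΛ : MulDissociated (Λ : Set (AddChar G Circle))) :
    #Λ * η ^ 2 ≤ 2 * log (1 / (#D / Fintype.card G)) := by
  set N : ℝ := (Fintype.card G : ℝ)
  set n : ℝ := (#D : ℝ)
  have hN : 0 < N := Nat.cast_pos.2 Fintype.card_pos
  have hn : 0 < n := Nat.cast_pos.2 hD.card_pos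
  -- rotate each large Fourier coefficient onto the positive real axis
  let c (γ : AddChar G Circle) : ℂ := conj (fourierInd D γ) / ‖fourierInd D γ‖
  let g (x : G) : ℝ := ∑ γ ∈ Λ, (c γ * γ x).re
  have hcorr : n * (#Λ * η ^ 2) ≤ ∑ x ∈ D, η * g x := by
    have hsum (γ : AddChar G Circle) : ∑ x ∈ D, (c γ * γ x).re = N * ‖fourierInd D γ‖ := by
      rw [← Complex.re_sum, ← mul_sum, sum_coe_addChar_eq_card_mul_fourierInd, mul_left_comm,
        Complex.conj_div_norm_mul_self, ← Complex.ofReal_natCast, ← Complex.ofReal_mul,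
        Complex.ofReal_re]
    have hlarge : ∀ γ ∈ Λ, η * n ≤ N * ‖fourierInd D γ‖ := fun γ hγ ↦
      calc η * n = N * (η * (n / N)) := by field_simp
        _ ≤ N * ‖fourierInd D γ‖ := mul_le_mul_of_nonneg_left (hΛη hγ) hN.le
    calc n * (#Λ * η ^ 2) = η * ∑ _γ ∈ Λ, η * n := by rw [sum_const, nsmul_eq_mul]; ring
      _ ≤ η * ∑ γ ∈ Λ, N * ‖fourierInd D γ‖ := mul_le_mul_of_nonneg_left (sum_le_sum hlarge) hη
      _ = η * ∑ γ ∈ Λ, ∑ x ∈ D, (c γ * γ x).re := by simp only [hsum]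
      _ = ∑ x ∈ D, η * g x := by rw [sum_comm, mul_sum]
  have hexp : n * exp (#Λ * η ^ 2) ≤ N * exp (#Λ * (η ^ 2 / 2)) :=
    calc n * exp (#Λ * η ^ 2) ≤ ∑ x ∈ D, exp (η * g x) := card_mul_exp_le_sum_exp D hcorr
      _ ≤ ∑ x, exp (η * g x) := sum_le_univ_sum_of_nonneg fun _ ↦ (exp_pos _).le
      _ = N * 𝔼 x, exp (η * g x) := (card_mul_expect _ _).symm
      _ ≤ N * exp (#Λ * (η ^ 2 / 2)) := by
        gcongr
        exact hΛ.expect_exp_sum_re_le (fun _ ↦ Complex.norm_conj_div_norm_le_one _) η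
  have hlog := log_le_log (by positivity) hexp
  rw [log_mul hn.ne' (exp_pos _).ne', log_mul hN.ne' (exp_pos _).ne', log_exp, log_exp] at hlog
  rw [one_div_div, log_div hN.ne' hn.ne']
  linarith

lemma log_one_div_density_nonneg (D : Finset G) :
    0 ≤ Real.log (1 / ((#D : ℝ) / Fintype.card G)) := by
  rw [one_div, Real.log_inv, neg_nonneg]
  exact Real.log_nonpos (by positivity)
    (div_le_one_of_le₀ (Nat.cast_le.2 (card_le_univ D)) (Nat.cast_nonneg _))

end Dissociated

/-- Chang's lemma.  Let `G` be a finite additive group and `D ⊆ G` of density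
`δ > 0`.  For `η > 0` there is `Δ̃ ⊆ Δ_η(D)` with `|Δ̃| ≤ C η⁻² log(1/δ)`, `C` absolute, such
that every `γ ∈ Δ_η(D)` is a `{-1,0,1}`-combination of the elements of `Δ̃` (written
multiplicatively, the dual group being `AddChar G Circle`). -/
theorem statement_4 :
    ∃ C : ℝ, 0 < C ∧
      ∀ (G : Type) [AddCommGroup G] [Fintype G] (D : Finset G) (η : ℝ),
        D.Nonempty → 0 < η →
        ∃ Δt : Finset (AddChar G Circle),
          (Δt : Set (AddChar G Circle)) ⊆ specSet η D ∧
          (Δt.card : ℝ) ≤ C * η⁻¹ ^ 2 * Real.log (1 / ((D.card : ℝ) / Fintype.card G)) ∧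
          ∀ γ ∈ specSet η D, ∃ ε : AddChar G Circle → ℤ,
            (∀ lam, ε lam = -1 ∨ ε lam = 0 ∨ ε lam = 1) ∧
            γ = ∏ lam ∈ Δt, lam ^ ε lam := by
  refine ⟨2, two_pos, fun G _ _ D η hD hη ↦ ?_⟩
  classical
  set B := 2 * η⁻¹ ^ 2 * Real.log (1 / ((#D : ℝ) / Fintype.card G)) with hB
  have hdiss_card : ∀ Λ ⊆ univ.filter (· ∈ specSet η D),
      MulDissociated (Λ : Set (AddChar G Circle)) → #Λ ≤ ⌊B⌋₊ := by
    intro Λ hΛη hΛ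
    refine Nat.le_floor ?_
    calc (#Λ : ℝ) = #Λ * η ^ 2 * η⁻¹ ^ 2 := by
          rw [mul_assoc, ← mul_pow, mul_inv_cancel₀ hη.ne', one_pow, mul_one]
      _ ≤ 2 * Real.log (1 / (#D / Fintype.card G)) * η⁻¹ ^ 2 :=
        mul_le_mul_of_nonneg_right (card_mul_sq_le_of_mulDissociated_subset_specSet hD hη.le
          (fun γ hγ ↦ (mem_filter.1 (hΛη hγ)).2) hΛ) (by positivity)
      _ = B := by rw [hB]; ring
  obtain ⟨Δt, hsub, hcard, hspan⟩ :=
    exists_subset_mulSpan_card_le_of_forall_mulDissociated hdiss_card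
  refine ⟨Δt, fun γ hγ ↦ (mem_filter.1 (hsub hγ)).2, (Nat.cast_le.2 hcard).trans
    (Nat.floor_le (mul_nonneg (by positivity) (log_one_div_density_nonneg D))), fun γ hγ ↦ ?_⟩
  obtain ⟨ε, hε, hprod⟩ := mem_mulSpan.1 (hspan (mem_filter.2 ⟨mem_univ γ, hγ⟩))
  exact ⟨ε, hε, hprod.symm⟩
end

section
/- Let B = B_ρ(Γ) be a regular Bohr set in ℤ/Nℤ of rank k, and let B' ⊆ B_{ερ}(Γ) be a nonempty set with ε ≤ c/k for a sufficiently small absolute constant c > 0. Then for any f : ℤ/Nℤ → ℂ with ‖f‖_∞ ≤ 1, ⟨f, B ∗ β'⟩ = (𝔼_{x∈B} f(x) + O(εk)) μ_G(B), where the implied constant is absolute. -/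
open Finset

/-- The standard character `e(x) = exp(2πi x / N)` on `ℤ/Nℤ`. -/
noncomputable def eZ (N : ℕ) (x : ZMod N) : ℂ :=
  Complex.exp (2 * Real.pi * Complex.I * (x.val : ℂ) / (N : ℂ))

/-- The Bohr set `B_ρ(Γ) = {x ∈ ℤ/Nℤ : |e(γx) - 1| < ρ for all γ ∈ Γ}`, of rank `Γ.card` and
width `ρ`. -/
noncomputable def bohrZ (N : ℕ) [NeZero N] (Γ : Finset (ZMod N)) (ρ : ℝ) : Finset (ZMod N) :=
  letI := Classical.decPred fun x : ZMod N => ∀ γ ∈ Γ, Norm.norm (eZ N (γ * x) - 1) < ρ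
  Finset.univ.filter fun x => ∀ γ ∈ Γ, Norm.norm (eZ N (γ * x) - 1) < ρ

/-- A Bohr set `B_ρ(Γ)` of rank `k = Γ.card` is regular if
`|B|/(1 + 100k|η|) ≤ |B_{(1+η)ρ}(Γ)| ≤ (1 + 100k|η|)|B|` whenever `|η| ≤ 1/(100k)`. -/
def IsRegularBohr (N : ℕ) [NeZero N] (Γ : Finset (ZMod N)) (ρ : ℝ) : Prop :=
  ∀ η : ℝ, |η| ≤ 1 / (100 * Γ.card) →
    ((bohrZ N Γ ρ).card : ℝ) / (1 + 100 * Γ.card * |η|) ≤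
        ((bohrZ N Γ ((1 + η) * ρ)).card : ℝ) ∧
      ((bohrZ N Γ ((1 + η) * ρ)).card : ℝ) ≤ (1 + 100 * Γ.card * |η|) * (bohrZ N Γ ρ).card

/-! Every translate `B + y` with `y ∈ B' ⊆ B_{ερ}` lies, together with `B`, in `B_{(1+ε)ρ}`, and
regularity gives `|B_{(1+ε)ρ}| - |B| ≤ 100kε|B|`. So `B + y` and `B` differ in at most `200kε|B|`
points, and the sum of `f` over `B + y` is within `200kε|B|` of its sum over `B`. Unfolding the
convolution, `N⟨f, B ∗ β'⟩` is the average over `y ∈ B'` of the sum of `f` over `B + y`. -/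

section Sums

variable {ι E : Type*} [SeminormedAddCommGroup E]

lemma norm_sum_le_card_of_norm_le_one {f : ι → E} (hf : ∀ i, ‖f i‖ ≤ 1) (s : Finset ι) :
    ‖∑ i ∈ s, f i‖ ≤ #s := by
  simpa using norm_sum_le_of_le s fun i _ => hf i

lemma norm_sum_sub_sum_le_card_sdiff [DecidableEq ι] {f : ι → E} (hf : ∀ i, ‖f i‖ ≤ 1)
    (s t : Finset ι) :
    ‖∑ i ∈ s, f i - ∑ i ∈ t, f i‖ ≤ #(s \ t) + #(t \ s) := by
  rw [← sum_sdiff_sub_sum_sdiff]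
  exact (norm_sub_le _ _).trans <|
    add_le_add (norm_sum_le_card_of_norm_le_one hf _) (norm_sum_le_card_of_norm_le_one hf _)

lemma card_sdiff_le_card_sub_card [DecidableEq ι] {s t u : Finset ι} (hs : s ⊆ u) (ht : t ⊆ u) :
    #(s \ t) ≤ #u - #t :=
  (card_le_card (sdiff_subset_sdiff hs le_rfl)).trans_eq (card_sdiff_of_subset ht)

lemma norm_sum_div_card_le {𝕜 : Type*} [RCLike 𝕜] {g : ι → 𝕜} {s : Finset ι} {M : ℝ}
    (hs : s.Nonempty) (hg : ∀ i ∈ s, ‖g i‖ ≤ M) : ‖(∑ i ∈ s, g i) / #s‖ ≤ M := by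
  rw [norm_div, RCLike.norm_natCast, div_le_iff₀ (by exact_mod_cast hs.card_pos), mul_comm]
  simpa using norm_sum_le_of_le s hg

end Sums

lemma norm_sum_add_sub_sum_le {G E : Type*} [AddGroup G] [DecidableEq G]
    [SeminormedAddCommGroup E] {f : G → E} (hf : ∀ x, ‖f x‖ ≤ 1) {s u : Finset G} {y : G}
    (hs : s ⊆ u) (hsy : s.map (addRightEmbedding y) ⊆ u) :
    ‖∑ x ∈ s, f (x + y) - ∑ x ∈ s, f x‖ ≤ 2 * ((#u : ℝ) - #s) := by
  set s' := s.map (addRightEmbedding y)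
  have hsymm_diff : #(s' \ s) + #(s \ s') ≤ 2 * (#u - #s) := by
    have h₁ := card_sdiff_le_card_sub_card hsy hs
    have h₂ := card_sdiff_le_card_sub_card hs hsy
    rw [card_map] at h₂
    omega
  calc ‖∑ x ∈ s, f (x + y) - ∑ x ∈ s, f x‖ = ‖∑ x ∈ s', f x - ∑ x ∈ s, f x‖ := by
        rw [sum_map]; rfl
    _ ≤ #(s' \ s) + #(s \ s') := norm_sum_sub_sum_le_card_sdiff hf _ _
    _ ≤ 2 * ((#u : ℝ) - #s) := by
        rw [← Nat.cast_sub (card_le_card hs)]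
        exact_mod_cast hsymm_diff

lemma sum_mul_sum_ind_sub {G : Type} [AddCommGroup G] [Fintype G] (f : G → ℂ)
    (A S : Finset G) :
    ∑ x, f x * ∑ y ∈ S, (ind A (x - y) : ℂ) = ∑ y ∈ S, ∑ z ∈ A, f (z + y) := by
  classical
  simp_rw [mul_sum]
  rw [sum_comm]
  refine sum_congr rfl fun y _ => ?_
  rw [← Equiv.sum_comp (Equiv.addRight y)]
  simp [ind, apply_ite, sum_ite_mem]

lemma norm_mul_sub_one_le {R : Type*} [SeminormedRing R] {a b : R} (ha : ‖a‖ ≤ 1) :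
    ‖a * b - 1‖ ≤ ‖a - 1‖ + ‖b - 1‖ :=
  calc ‖a * b - 1‖ = ‖a * (b - 1) + (a - 1)‖ := by noncomm_ring
    _ ≤ ‖a * (b - 1)‖ + ‖a - 1‖ := norm_add_le _ _
    _ ≤ ‖a - 1‖ + ‖b - 1‖ := by
      rw [add_comm]
      exact add_le_add_right ((norm_mul_le _ _).trans (mul_le_of_le_one_left (norm_nonneg _) ha)) _

section Bohr

variable {N : ℕ} [NeZero N] {Γ : Finset (ZMod N)} {ρ ρ' : ℝ} {x y : ZMod N}

lemma eZ_eq_toCircle (x : ZMod N) : eZ N x = ZMod.toCircle x := by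
  rw [ZMod.toCircle_apply]; rfl

lemma norm_eZ (x : ZMod N) : ‖eZ N x‖ = 1 := by
  rw [eZ_eq_toCircle]; exact Circle.norm_coe _

lemma mem_bohrZ : x ∈ bohrZ N Γ ρ ↔ ∀ γ ∈ Γ, ‖eZ N (γ * x) - 1‖ < ρ := by
  simp [bohrZ]

lemma add_mem_bohrZ (hx : x ∈ bohrZ N Γ ρ) (hy : y ∈ bohrZ N Γ ρ') :
    x + y ∈ bohrZ N Γ (ρ + ρ') := by
  refine mem_bohrZ.2 fun γ hγ => ?_
  have hmul : eZ N (γ * (x + y)) = eZ N (γ * x) * eZ N (γ * y) := by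
    simp only [eZ_eq_toCircle, mul_add, AddChar.map_add_eq_mul, Circle.coe_mul]
  rw [hmul]
  exact (norm_mul_sub_one_le (norm_eZ _).le).trans_lt
    (add_lt_add (mem_bohrZ.1 hx γ hγ) (mem_bohrZ.1 hy γ hγ))

lemma bohrZ_subset_bohrZ_add (h : (bohrZ N Γ ρ').Nonempty) :
    bohrZ N Γ ρ ⊆ bohrZ N Γ (ρ + ρ') := by
  obtain ⟨y, hy⟩ := h
  exact fun x hx => mem_bohrZ.2 fun γ hγ => (mem_bohrZ.1 hx γ hγ).trans_le <|
    le_add_of_nonneg_right ((norm_nonneg _).trans (mem_bohrZ.1 hy γ hγ).le)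

lemma map_addRight_bohrZ_subset (hy : y ∈ bohrZ N Γ ρ') :
    (bohrZ N Γ ρ).map (addRightEmbedding y) ⊆ bohrZ N Γ (ρ + ρ') := by
  simp only [subset_iff, mem_map, addRightEmbedding_apply]
  rintro _ ⟨x, hx, rfl⟩
  exact add_mem_bohrZ hx hy

lemma IsRegularBohr.card_sub_card_le {η : ℝ} (hreg : IsRegularBohr N Γ ρ) (hη : 0 ≤ η)
    (hηk : η ≤ 1 / (100 * #Γ)) :
    (#(bohrZ N Γ ((1 + η) * ρ)) : ℝ) - #(bohrZ N Γ ρ) ≤ 100 * #Γ * η * #(bohrZ N Γ ρ) := by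
  have h := (hreg η (by rwa [abs_of_nonneg hη])).2
  rw [abs_of_nonneg hη] at h
  linarith

end Bohr

lemma sum_mul_avg_ind_sub_sub_eq {G : Type} [AddCommGroup G] [Fintype G] (f : G → ℂ)
    (A S : Finset G) (hS : S.Nonempty) (n : ℕ) :
    (∑ x, f x * (((∑ y ∈ S, ind A (x - y)) / #S : ℝ) : ℂ)) / n -
        (∑ x ∈ A, f x) / #A * ((#A / n : ℝ) : ℂ) =
      (∑ y ∈ S, (∑ z ∈ A, f (z + y) - ∑ z ∈ A, f z)) / #S / n := by
  have hS' : (#S : ℂ) ≠ 0 := by exact_mod_cast hS.card_pos.ne'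
  have hmean : (∑ x ∈ A, f x) / #A * ((#A / n : ℝ) : ℂ) = (∑ x ∈ A, f x) / n := by
    rcases A.eq_empty_or_nonempty with rfl | hA
    · simp
    · have : (#A : ℂ) ≠ 0 := by exact_mod_cast hA.card_pos.ne'
      push_cast
      field_simp
  rw [hmean]
  push_cast
  simp_rw [← mul_div_assoc, ← sum_div, sum_mul_sum_ind_sub, sum_sub_distrib, sum_const,
    nsmul_eq_mul]
  field_simp

/-- Lemma 6.2 of the paper.  Let `B = B_ρ(Γ)` be a regular Bohr set in
`ℤ/Nℤ` of rank `k`, and `B' ⊆ B_{ερ}(Γ)` nonempty with `ε ≤ c/k` for a sufficiently small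
absolute constant `c > 0`.  Then for any `f : ℤ/Nℤ → ℂ` with `‖f‖_∞ ≤ 1`,
`⟨f, B ∗ β'⟩ = (𝔼_{x ∈ B} f(x) + O(εk)) μ_G(B)`, with an absolute implied constant.  Here
`β' = μ_{B'}`, `B ∗ β'(x) = 𝔼_{y ∈ B'} 1_B(x - y)`, `μ_G(B) = |B|/N` and
`⟨f, g⟩ = 𝔼_{x ∈ G} f(x) conj(g(x))` (the second argument being real-valued here). -/
theorem statement_13 :
    ∃ c C : ℝ, 0 < c ∧ 0 < C ∧
      ∀ (N : ℕ) [NeZero N] (Γ : Finset (ZMod N)) (ρ ε : ℝ) (B' : Finset (ZMod N)),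
        IsRegularBohr N Γ ρ → B' ⊆ bohrZ N Γ (ε * ρ) → B'.Nonempty →
        0 < ε → ε ≤ c / Γ.card →
        ∀ f : ZMod N → ℂ, (∀ x, Norm.norm (f x) ≤ 1) →
          Norm.norm
              ((∑ x : ZMod N,
                  f x * (((∑ y ∈ B', ind (bohrZ N Γ ρ) (x - y)) / (B'.card : ℝ) : ℝ) : ℂ)) /
                  (N : ℂ) -
                ((∑ x ∈ bohrZ N Γ ρ, f x) / ((bohrZ N Γ ρ).card : ℂ)) *
                  (((bohrZ N Γ ρ).card : ℝ) / (N : ℝ) : ℝ)) ≤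
            C * ε * Γ.card * (((bohrZ N Γ ρ).card : ℝ) / N) := by
  refine ⟨1 / 100, 200, by norm_num, by norm_num, ?_⟩
  intro N _ Γ ρ ε B' hreg hB' hB'ne hε hεk f hf
  set B := bohrZ N Γ ρ
  have hgrowth := hreg.card_sub_card_le hε.le (by rwa [div_div] at hεk)
  have hshift : ∀ y ∈ B', ‖∑ z ∈ B, f (z + y) - ∑ z ∈ B, f z‖ ≤ 200 * ε * #Γ * #B := by
    intro y hy
    refine (norm_sum_add_sub_sum_le hf (u := bohrZ N Γ ((1 + ε) * ρ)) ?_ ?_).trans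
      (by linarith)
    all_goals rw [add_mul, one_mul]
    · exact bohrZ_subset_bohrZ_add (hB'ne.mono hB')
    · exact map_addRight_bohrZ_subset (hB' hy)
  rw [sum_mul_avg_ind_sub_sub_eq f B B' hB'ne N, norm_div, Complex.norm_natCast, ← mul_div_assoc]
  gcongr
  exact norm_sum_div_card_le hB'ne hshift
end
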